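/- arXiv:1804.08677 — 2 statements merged into one kernel-verified Lean document; each statement's English description precedes it below -/
import Mathlib

section
/- If G = (σ, μ) is a self-complementary fuzzy graph on finite vertex set V, then ∑_{u,v∈V} μ(u,v) = (1/2) ∑_{u,v∈V} min(σ(u), σ(v)). -/
open Finset

/-- Predicate: `(σ, μ)` is a fuzzy graph on the (finite) vertex set `W`:
`σ` takes values in `[0,1]`, and `μ` is symmetric, nonnegative and
satisfies `μ x y ≤ min (σ x) (σ y)`. -/
def IsFuzzyOn {V : Type*} (W : Finset V) (σ : V → ℝ) (μ : V → V → ℝ) : Prop :=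
  (∀ x ∈ W, 0 ≤ σ x ∧ σ x ≤ 1) ∧
  (∀ x ∈ W, ∀ y ∈ W, 0 ≤ μ x y ∧ μ x y ≤ min (σ x) (σ y) ∧ μ x y = μ y x)

/-- Sum of `μ` over ordered pairs of distinct vertices of `W`; this equals
`2 · ∑_{{u,v} ⊆ W, u ≠ v} μ u v` (each unordered pair counted once) when `μ` is symmetric. -/
noncomputable def pairSumOn {V : Type*} [DecidableEq V] (W : Finset V) (μ : V → V → ℝ) : ℝ :=
  ∑ x ∈ W, ∑ y ∈ W.erase x, μ x y

/-- The *-density `D*` of a fuzzy graph `(σ, μ)` on vertex set `W`: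
`2 · (∑_{{u,v}, u≠v} μ u v) / (∑_u σ u)`. -/
noncomputable def dstarOn {V : Type*} [DecidableEq V] (W : Finset V) (σ : V → ℝ) (μ : V → V → ℝ) : ℝ :=
  pairSumOn W μ / ∑ x ∈ W, σ x

/-- A fuzzy graph `(σ, μ)` on all of `V` is *-balanced if every nonempty fuzzy
subgraph `(σ', μ')` on a subset `W` satisfies `D*(H) ≤ D*(G)`. -/
def StarBalanced {V : Type*} [Fintype V] [DecidableEq V] (σ : V → ℝ) (μ : V → V → ℝ) : Prop :=
  ∀ (W : Finset V) (σ' : V → ℝ) (μ' : V → V → ℝ),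
    IsFuzzyOn W σ' μ' →
    (∀ x ∈ W, σ' x ≤ σ x) →
    (∀ x ∈ W, ∀ y ∈ W, μ' x y ≤ μ x y) →
    0 < ∑ x ∈ W, σ' x →
    dstarOn W σ' μ' ≤ dstarOn Finset.univ σ μ

theorem selfComplementary_edge_sum {V : Type*} [Fintype V]
    (σ : V → ℝ) (μ : V → V → ℝ)
    (hG : IsFuzzyOn Finset.univ σ μ)
    (g : V ≃ V)
    (hσ : ∀ x, σ x = σ (g x))
    (hμ : ∀ x y, min (σ x) (σ y) - μ x y = μ (g x) (g y)) :
    ∑ u, ∑ v, μ u v = (1 / 2) * ∑ u, ∑ v, min (σ u) (σ v) := by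
  have h1 : ∑ u, ∑ v, μ (g u) (g v) = ∑ u, ∑ v, μ u v := by
    calc ∑ u, ∑ v, μ (g u) (g v) = ∑ u, ∑ v, μ u (g v) :=
          Equiv.sum_comp g (fun u => ∑ v, μ u (g v))
      _ = ∑ u, ∑ v, μ u v :=
          Finset.sum_congr rfl fun u _ => Equiv.sum_comp g (fun v => μ u v)
  have h2 : ∑ u, ∑ v, (min (σ u) (σ v) - μ u v) = ∑ u, ∑ v, μ (g u) (g v) := by
    exact Finset.sum_congr rfl fun u _ => Finset.sum_congr rfl fun v _ => hμ u v
  have h3 : ∑ u, ∑ v, (min (σ u) (σ v) - μ u v)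
      = (∑ u, ∑ v, min (σ u) (σ v)) - ∑ u, ∑ v, μ u v := by
    simp [Finset.sum_sub_distrib]
  rw [h1] at h2
  linarith
end

section
/- Let C_n (n > 3) be a strong fuzzy cycle on n vertices whose vertex function σ is constant equal to c > 0, so every edge of the cycle has membership value c. Then D*(C_n) = 2 and C_n is *-balanced: every nonempty fuzzy subgraph H satisfies D*(H) ≤ 2. -/
open Finset

lemma sum_ind_cycle (n : ℕ) [NeZero n] (hn : 3 < n) (x : ZMod n) (t : ℝ) :
    ∑ y ∈ (univ : Finset (ZMod n)).erase x,
      (if y = x + 1 ∨ x = y + 1 then t else 0) = 2 * t := by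
  have h1 : (1 : ZMod n) ≠ 0 := by
    intro h
    have hd := (ZMod.natCast_eq_zero_iff 1 n).mp (by exact_mod_cast h)
    have := Nat.le_of_dvd one_pos hd
    omega
  have h2 : (2 : ZMod n) ≠ 0 := by
    intro h
    have hd := (ZMod.natCast_eq_zero_iff 2 n).mp (by exact_mod_cast h)
    have := Nat.le_of_dvd two_pos hd
    omega
  have hne : x + 1 ≠ x - 1 := by
    intro h
    apply h2
    have h' : x + 2 = x := by rw [show (2:ZMod n) = 1 + 1 by ring, ← add_assoc, h]; ring
    exact add_eq_left.mp h'
  have hx1 : x + 1 ∈ (univ : Finset (ZMod n)).erase x := by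
    rw [Finset.mem_erase]
    exact ⟨fun h => h1 (add_eq_left.mp h), mem_univ _⟩
  have hx2 : x - 1 ∈ (univ : Finset (ZMod n)).erase x := by
    rw [Finset.mem_erase]
    exact ⟨fun h => h1 (sub_eq_self.mp h), mem_univ _⟩
  have key : ∀ y : ZMod n, (if y = x + 1 ∨ x = y + 1 then t else 0)
      = (if y = x + 1 then t else 0) + (if y = x - 1 then t else 0) := by
    intro y
    by_cases hA : y = x + 1
    · subst hA
      rw [if_pos (Or.inl rfl), if_pos rfl, if_neg hne]; ring
    · by_cases hB : y = x - 1
      · subst hB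
        rw [if_pos (Or.inr (by ring)), if_neg hne.symm, if_pos rfl]; ring
      · have hB' : ¬ x = y + 1 := fun h => hB (by rw [h]; ring)
        rw [if_neg (by tauto), if_neg hA, if_neg hB]; ring
  rw [Finset.sum_congr rfl (fun y _ => key y), Finset.sum_add_distrib,
    Finset.sum_ite_eq' _ (x+1) (fun _ => t), Finset.sum_ite_eq' _ (x-1) (fun _ => t),
    if_pos hx1, if_pos hx2]
  ring

theorem cycle_const_starBalanced (n : ℕ) [NeZero n] (hn : 3 < n)
    (c : ℝ) (hc0 : 0 < c) (hc1 : c ≤ 1)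
    (σ : ZMod n → ℝ) (μ : ZMod n → ZMod n → ℝ)
    (hσ : ∀ v, σ v = c)
    (hμ : ∀ i j : ZMod n, μ i j = if j = i + 1 ∨ i = j + 1 then c else 0) :
    dstarOn Finset.univ σ μ = 2 ∧ StarBalanced σ μ := by
  have hcard : (Fintype.card (ZMod n) : ℝ) = (n : ℝ) := by
    rw [ZMod.card]
  have hn0 : (0:ℝ) < (n:ℝ) := by positivity
  have hσsum : ∑ x : ZMod n, σ x = (n:ℝ) * c := by
    simp [hσ, Finset.sum_const, ZMod.card, mul_comm]
  have hpair : pairSumOn (univ : Finset (ZMod n)) μ = (n:ℝ) * (2 * c) := by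
    unfold pairSumOn
    have : ∀ x : ZMod n, ∑ y ∈ (univ : Finset (ZMod n)).erase x, μ x y = 2 * c := by
      intro x
      rw [Finset.sum_congr rfl (fun y _ => hμ x y)]
      exact sum_ind_cycle n hn x c
    rw [Finset.sum_congr rfl (fun x _ => this x)]
    simp [Finset.sum_const, ZMod.card, mul_comm]
  have hd2 : dstarOn (univ : Finset (ZMod n)) σ μ = 2 := by
    unfold dstarOn
    rw [hpair, hσsum, div_eq_iff (by positivity)]
    ring
  refine ⟨hd2, ?_⟩
  intro W σ' μ' hF hσle hμle hpos
  rw [hd2]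
  unfold dstarOn
  rw [div_le_iff₀ hpos]
  unfold pairSumOn
  have hbound : ∀ x ∈ W, ∑ y ∈ W.erase x, μ' x y ≤ 2 * σ' x := by
    intro x hxW
    have hσ'x : 0 ≤ σ' x := (hF.1 x hxW).1
    calc ∑ y ∈ W.erase x, μ' x y
        ≤ ∑ y ∈ W.erase x, (if y = x + 1 ∨ x = y + 1 then σ' x else 0) := by
          apply Finset.sum_le_sum
          intro y hy
          have hyW : y ∈ W := Finset.mem_of_mem_erase hy
          by_cases hcond : y = x + 1 ∨ x = y + 1
          · rw [if_pos hcond]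
            exact le_trans (hF.2 x hxW y hyW).2.1 (min_le_left _ _)
          · rw [if_neg hcond]
            have := hμle x hxW y hyW
            rw [hμ x y, if_neg hcond] at this
            exact this
      _ ≤ ∑ y ∈ (univ : Finset (ZMod n)).erase x,
            (if y = x + 1 ∨ x = y + 1 then σ' x else 0) := by
          apply Finset.sum_le_sum_of_subset_of_nonneg
          · exact Finset.erase_subset_erase x (Finset.subset_univ W)
          · intro y _ _
            by_cases hcond : y = x + 1 ∨ x = y + 1 <;> simp [hcond, hσ'x]
      _ = 2 * σ' x := sum_ind_cycle n hn x (σ' x)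
  calc ∑ x ∈ W, ∑ y ∈ W.erase x, μ' x y
      ≤ ∑ x ∈ W, 2 * σ' x := Finset.sum_le_sum hbound
    _ = 2 * ∑ x ∈ W, σ' x := by rw [Finset.mul_sum]
end
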